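/- arXiv:2302.03886 — 2 statements merged into one kernel-verified Lean document; each statement's English description precedes it below -/
import Mathlib

section
/- Let X be an order-N real tensor of shape (I_1,…,I_N), r = (R_1,…,R_N) a core shape with 1 ≤ R_n ≤ I_n, and X̂ the r-truncated HOSVD reconstruction of X. Then L(X,r) ≤ ‖X − X̂‖_F² ≤ Σ_{i_1=R_1+1}^{I_1} (σ_{i_1}^(1))² + Σ_{i_2=R_2+1}^{I_2} (σ_{i_2}^(2))² + ⋯ + Σ_{i_N=R_N+1}^{I_N} (σ_{i_N}^(N))². -/
open scoped BigOperators
open Matrix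

/-- Combine a fixed `n`-th coordinate with coordinates for the remaining modes. -/
def fullIdx {N : ℕ} {I : Fin N → ℕ} (n : Fin N) (i : Fin (I n))
    (j : ∀ m : {m : Fin N // m ≠ n}, Fin (I m.1)) : ∀ k, Fin (I k) :=
  fun k => if h : k = n then Fin.cast (congrArg I h).symm i else j ⟨k, h⟩

/-- Mode-`n` unfolding of a tensor. -/
def modeUnfold {N : ℕ} {I : Fin N → ℕ} (X : (∀ k, Fin (I k)) → ℝ) (n : Fin N) :
    Matrix (Fin (I n)) (∀ m : {m : Fin N // m ≠ n}, Fin (I m.1)) ℝ :=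
  fun i j => X (fullIdx n i j)

/-- Squared Frobenius norm of a tensor. -/
noncomputable def frobSq {N : ℕ} {I : Fin N → ℕ} (X : (∀ k, Fin (I k)) → ℝ) : ℝ :=
  ∑ i : ∀ k, Fin (I k), (X i) ^ 2

/-- Tucker/multilinear reconstruction `G ×₁ A 1 ×₂ ⋯ ×_N A N`. -/
noncomputable def tucker {N : ℕ} {I R : Fin N → ℕ} (G : (∀ k, Fin (R k)) → ℝ)
    (A : ∀ n, Matrix (Fin (I n)) (Fin (R n)) ℝ) : (∀ k, Fin (I k)) → ℝ :=
  fun i => ∑ j : ∀ k, Fin (R k), G j * ∏ n, A n (i n) (j n)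

/-- Optimal rank-`R` Tucker loss `L(X, R)`. -/
noncomputable def tuckerLoss {N : ℕ} (I : Fin N → ℕ) (X : (∀ k, Fin (I k)) → ℝ)
    (R : Fin N → ℕ) : ℝ :=
  sInf {v : ℝ | ∃ (G : (∀ k, Fin (R k)) → ℝ)
    (A : ∀ n, Matrix (Fin (I n)) (Fin (R n)) ℝ),
    v = frobSq (fun i => X i - tucker G A i)}

/-- `σ` lists the singular values of `M` in nonincreasing order:
entries are nonnegative, nonincreasing, and their squares are the eigenvalues
of the positive semidefinite matrix `M * Mᵀ` (up to a permutation). -/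
def IsSingularValues {k : ℕ} {c : Type*} [Fintype c]
    (M : Matrix (Fin k) c ℝ) (σ : Fin k → ℝ) : Prop :=
  (∀ i, 0 ≤ σ i) ∧ Antitone σ ∧
    ∃ e : Equiv.Perm (Fin k), ∀ i, σ i ^ 2 =
      (Matrix.isHermitian_mul_conjTranspose_self M).eigenvalues (e i)

/-- Truncation of a tensor to the leading `R`-block. -/
def truncate {N : ℕ} {I : Fin N → ℕ} (S : (∀ k, Fin (I k)) → ℝ)
    (R : Fin N → ℕ) : (∀ k, Fin (I k)) → ℝ :=
  fun i => if ∀ n, (i n : ℕ) < R n then S i else 0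

/-- Surrogate loss `L̃(X, R)`: sum of the squared tail singular values. -/
noncomputable def surrLoss {N : ℕ} {I : Fin N → ℕ} (σ : ∀ n, Fin (I n) → ℝ)
    (R : Fin N → ℕ) : ℝ :=
  ∑ n, ∑ i ∈ Finset.univ.filter (fun i : Fin (I n) => R n ≤ (i : ℕ)), σ n i ^ 2

/-- Packing objective: sum of the squared leading singular values. -/
noncomputable def packObj {N : ℕ} {I : Fin N → ℕ} (σ : ∀ n, Fin (I n) → ℝ)
    (R : Fin N → ℕ) : ℝ :=
  ∑ n, ∑ i ∈ Finset.univ.filter (fun i : Fin (I n) => (i : ℕ) < R n), σ n i ^ 2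

/-!
Orthogonal factor matrices make `G ↦ tucker G U` an isometry, so `‖X - X̂‖_F = ‖S - S̄‖_F`,
and every entry of `S` outside the leading `R`-block lies in a slice `S_{i_n = α}` with
`α > R_n`; hence the error is at most the sum of the squared norms of these slices. Because the
slices of `S` are mutually orthogonal, `X_(n) X_(n)ᵀ = U⁽ⁿ⁾ diag(‖S_{i_n = α}‖²) U⁽ⁿ⁾ᵀ`, so the
squared slice norms are the eigenvalues of this matrix; both lists being sorted, they are the
squared singular values of `X_(n)` in the same order. The lower bound holds
because `X̂` is itself a Tucker decomposition, with core the leading block of `S` and factors the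
leading columns of the `U⁽ⁿ⁾`.
-/

open Finset

section PiKronecker

variable {ι R : Type*} [Fintype ι] [CommSemiring R] {m n p : ι → Type*}

def piKronecker (A : ∀ i, Matrix (m i) (n i) R) : Matrix (∀ i, m i) (∀ i, n i) R :=
  of fun a b => ∏ i, A i (a i) (b i)

@[simp]
lemma piKronecker_apply (A : ∀ i, Matrix (m i) (n i) R) (a : ∀ i, m i) (b : ∀ i, n i) :
    piKronecker A a b = ∏ i, A i (a i) (b i) :=
  rfl

lemma transpose_piKronecker (A : ∀ i, Matrix (m i) (n i) R) :
    (piKronecker A)ᵀ = piKronecker fun i => (A i)ᵀ :=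
  rfl

lemma piKronecker_mul_piKronecker [DecidableEq ι] [∀ i, Fintype (n i)]
    (A : ∀ i, Matrix (m i) (n i) R) (B : ∀ i, Matrix (n i) (p i) R) :
    piKronecker A * piKronecker B = piKronecker fun i => A i * B i := by
  ext a c
  simp only [mul_apply, piKronecker_apply, Fintype.prod_sum, prod_mul_distrib]

lemma piKronecker_one [DecidableEq ι] [∀ i, DecidableEq (n i)] :
    piKronecker (fun i => (1 : Matrix (n i) (n i) R)) = 1 := by
  ext a b
  simp only [piKronecker_apply, one_apply, Fintype.prod_boole, funext_iff]

lemma transpose_piKronecker_mul_self [DecidableEq ι] [∀ i, Fintype (m i)] [∀ i, DecidableEq (n i)]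
    {A : ∀ i, Matrix (m i) (n i) R} (hA : ∀ i, (A i)ᵀ * A i = 1) :
    (piKronecker A)ᵀ * piKronecker A = 1 := by
  rw [transpose_piKronecker, piKronecker_mul_piKronecker]
  simp only [hA, piKronecker_one]

end PiKronecker

lemma dotProduct_mulVec_self_of_transpose_mul_self {m n R : Type*} [Fintype m] [Fintype n]
    [DecidableEq n] [CommSemiring R] {M : Matrix m n R} (hM : Mᵀ * M = 1) (v : n → R) :
    (M *ᵥ v) ⬝ᵥ (M *ᵥ v) = v ⬝ᵥ v := by
  rw [dotProduct_mulVec, ← mulVec_transpose, mulVec_mulVec, hM, one_mulVec]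

lemma mul_transpose_self_eq_diagonal {m n R : Type*} [Fintype n] [DecidableEq m] [CommSemiring R]
    {M : Matrix m n R} (hM : Pairwise fun α β => ∑ j, M α j * M β j = 0) :
    M * Mᵀ = diagonal fun α => ∑ j, M α j ^ 2 := by
  ext α β
  rcases eq_or_ne α β with rfl | hne
  · simp only [mul_apply, transpose_apply, diagonal_apply_eq, sq]
  · rw [mul_apply, diagonal_apply_ne _ hne]
    exact hM hne

lemma Matrix.IsHermitian.map_eigenvalues_eq_of_eq_conj_diagonal {n : Type*} [Fintype n]
    [DecidableEq n] {A : Matrix n n ℝ} (hA : A.IsHermitian) {P : Matrix n n ℝ}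
    (hP : Pᵀ * P = 1) {d : n → ℝ} (h : A = P * diagonal d * Pᵀ) :
    univ.val.map hA.eigenvalues = univ.val.map d := by
  have hchar : A.charpoly = (diagonal d).charpoly := by
    rw [h, Matrix.mul_assoc, charpoly_mul_comm, Matrix.mul_assoc, hP, Matrix.mul_one]
  have hroots := congrArg Polynomial.roots hchar
  rw [hA.roots_charpoly_eq_eigenvalues, charpoly_diagonal,
    Polynomial.roots_prod _ _ (prod_ne_zero_iff.mpr fun i _ => Polynomial.X_sub_C_ne_zero _)]
    at hroots
  simpa using hroots

lemma Antitone.eq_of_map_univ_eq {α : Type*} [LinearOrder α] {k : ℕ} {f g : Fin k → α}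
    (hf : Antitone f) (hg : Antitone g) (h : univ.val.map f = univ.val.map g) : f = g := by
  refine List.ofFn_injective (List.Perm.eq_of_sortedGE hf.sortedGE_ofFn hg.sortedGE_ofFn ?_)
  rwa [← Multiset.coe_eq_coe, ← Fin.univ_val_map, ← Fin.univ_val_map]

lemma IsSingularValues.sq_eq_of_eq_conj_diagonal {k : ℕ} {c : Type*} [Fintype c]
    {M : Matrix (Fin k) c ℝ} {σ : Fin k → ℝ} (hσ : IsSingularValues M σ)
    {P : Matrix (Fin k) (Fin k) ℝ} (hP : Pᵀ * P = 1) {d : Fin k → ℝ} (hd : Antitone d)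
    (h : M * Mᵀ = P * diagonal d * Pᵀ) : (σ · ^ 2) = d := by
  obtain ⟨hσ_nonneg, hσ_anti, e, he⟩ := hσ
  refine Antitone.eq_of_map_univ_eq (fun a b hab => pow_le_pow_left₀ (hσ_nonneg b) (hσ_anti hab) 2)
    hd ?_
  have hgram : M * Mᴴ = P * diagonal d * Pᵀ := by rwa [conjTranspose_eq_transpose_of_trivial]
  rw [← (isHermitian_mul_conjTranspose_self M).map_eigenvalues_eq_of_eq_conj_diagonal hP hgram,
    funext he, ← Function.comp_def, ← Multiset.map_map, Multiset.map_univ_val_equiv]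

section Tensor

variable {N : ℕ} {I J : Fin N → ℕ}

lemma frobSq_nonneg (X : (∀ k, Fin (I k)) → ℝ) : 0 ≤ frobSq X :=
  sum_nonneg fun _ _ => sq_nonneg _

lemma frobSq_eq_dotProduct (X : (∀ k, Fin (I k)) → ℝ) : frobSq X = X ⬝ᵥ X := by
  simp only [frobSq, dotProduct, sq]

lemma tucker_eq_piKronecker_mulVec (G : (∀ k, Fin (J k)) → ℝ)
    (A : ∀ n, Matrix (Fin (I n)) (Fin (J n)) ℝ) : tucker G A = piKronecker A *ᵥ G := by
  ext i
  simp only [tucker, mulVec, dotProduct, piKronecker_apply, mul_comm]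

lemma tucker_sub (G G' : (∀ k, Fin (J k)) → ℝ) (A : ∀ n, Matrix (Fin (I n)) (Fin (J n)) ℝ) :
    tucker G A - tucker G' A = tucker (G - G') A := by
  simp only [tucker_eq_piKronecker_mulVec, mulVec_sub]

lemma frobSq_tucker_of_orthogonal (G : (∀ k, Fin (I k)) → ℝ)
    {U : ∀ n, Matrix (Fin (I n)) (Fin (I n)) ℝ} (hU : ∀ n, (U n)ᵀ * U n = 1) :
    frobSq (tucker G U) = frobSq G := by
  rw [frobSq_eq_dotProduct, frobSq_eq_dotProduct, tucker_eq_piKronecker_mulVec,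
    dotProduct_mulVec_self_of_transpose_mul_self (transpose_piKronecker_mul_self hU)]

lemma tucker_truncate {R : Fin N → ℕ} (hR : ∀ n, R n ≤ I n) (S : (∀ k, Fin (I k)) → ℝ)
    (A : ∀ n, Matrix (Fin (J n)) (Fin (I n)) ℝ) :
    tucker (truncate S R) A =
      tucker (fun j => S fun k => Fin.castLE (hR k) (j k))
        (fun n => (A n).submatrix id (Fin.castLE (hR n))) := by
  ext i
  refine (Fintype.sum_of_injective (fun j k => Fin.castLE (hR k) (j k)) ?_ _ _ ?_ ?_).symm
  · intro j j' h
    funext k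
    exact Fin.castLE_injective _ (congrFun h k)
  · intro j hj
    rw [truncate, if_neg, zero_mul]
    exact fun hlt => hj ⟨fun k => ⟨j k, hlt k⟩, rfl⟩
  · intro j
    simp [truncate]

lemma tuckerLoss_le {R : Fin N → ℕ} (X : (∀ k, Fin (I k)) → ℝ) (G : (∀ k, Fin (R k)) → ℝ)
    (A : ∀ n, Matrix (Fin (I n)) (Fin (R n)) ℝ) :
    tuckerLoss I X R ≤ frobSq (X - tucker G A) :=
  csInf_le ⟨0, by rintro v ⟨G, A, rfl⟩; exact frobSq_nonneg _⟩ ⟨G, A, rfl⟩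

end Tensor

section Unfolding

variable {N : ℕ} {I J : Fin N → ℕ}

lemma fullIdx_eq_piSplitAt_symm (n : Fin N) (i : Fin (I n))
    (j : ∀ m : {m : Fin N // m ≠ n}, Fin (I m.1)) :
    fullIdx n i j = (Equiv.piSplitAt n fun k => Fin (I k)).symm (i, j) := by
  funext k
  by_cases h : k = n
  · subst h; rfl
  · simp [fullIdx, Equiv.piSplitAt, h]

@[simp]
lemma fullIdx_self (n : Fin N) (i : Fin (I n)) (j : ∀ m : {m : Fin N // m ≠ n}, Fin (I m.1)) :
    fullIdx n i j n = i := by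
  simp [fullIdx]

@[simp]
lemma fullIdx_val {n : Fin N} (i : Fin (I n)) (j : ∀ m : {m : Fin N // m ≠ n}, Fin (I m.1))
    (m : {m : Fin N // m ≠ n}) : fullIdx n i j m = j m := by
  simp [fullIdx, m.2]

lemma sum_eq_sum_fullIdx {M : Type*} [AddCommMonoid M] (n : Fin N) (F : (∀ k, Fin (I k)) → M) :
    ∑ i, F i = ∑ α : Fin (I n), ∑ j, F (fullIdx n α j) := by
  simp only [fullIdx_eq_piSplitAt_symm, ← Fintype.sum_prod_type']
  exact ((Equiv.piSplitAt n _).symm.sum_comp F).symm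

lemma modeUnfold_tucker (G : (∀ k, Fin (J k)) → ℝ) (A : ∀ n, Matrix (Fin (I n)) (Fin (J n)) ℝ)
    (n : Fin N) :
    modeUnfold (tucker G A) n =
      A n * modeUnfold G n * (piKronecker fun m : {m : Fin N // m ≠ n} => A m)ᵀ := by
  ext α j
  simp only [modeUnfold, tucker, mul_apply, transpose_apply, piKronecker_apply, sum_mul]
  rw [sum_eq_sum_fullIdx n, sum_comm]
  refine sum_congr rfl fun c _ => sum_congr rfl fun β _ => ?_
  rw [Fintype.prod_eq_mul_prod_subtype_ne _ n]
  simp only [fullIdx_self, fullIdx_val]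
  ring

end Unfolding

section Hosvd

variable {N : ℕ} {I : Fin N → ℕ}

lemma modeUnfold_tucker_mul_transpose {U : ∀ n, Matrix (Fin (I n)) (Fin (I n)) ℝ}
    (hU : ∀ n, (U n)ᵀ * U n = 1) (S : (∀ k, Fin (I k)) → ℝ) (n : Fin N) :
    modeUnfold (tucker S U) n * (modeUnfold (tucker S U) n)ᵀ =
      U n * (modeUnfold S n * (modeUnfold S n)ᵀ) * (U n)ᵀ := by
  have hK := transpose_piKronecker_mul_self fun m : {m : Fin N // m ≠ n} => hU m
  simp only [modeUnfold_tucker, transpose_mul, transpose_transpose, Matrix.mul_assoc]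
  rw [← Matrix.mul_assoc _ (piKronecker _), hK, Matrix.one_mul]

lemma sq_singularValues_modeUnfold_tucker {U : ∀ n, Matrix (Fin (I n)) (Fin (I n)) ℝ}
    (hU : ∀ n, (U n)ᵀ * U n = 1) {S : (∀ k, Fin (I k)) → ℝ} {n : Fin N}
    (horth : Pairwise fun α β => ∑ j, modeUnfold S n α j * modeUnfold S n β j = 0)
    (hord : Antitone fun α => ∑ j, modeUnfold S n α j ^ 2) {σ : Fin (I n) → ℝ}
    (hσ : IsSingularValues (modeUnfold (tucker S U) n) σ) :
    (σ · ^ 2) = fun α => ∑ j, modeUnfold S n α j ^ 2 :=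
  hσ.sq_eq_of_eq_conj_diagonal (hU n) hord <| by
    rw [modeUnfold_tucker_mul_transpose hU, mul_transpose_self_eq_diagonal horth]

lemma sq_sub_truncate_le (S : (∀ k, Fin (I k)) → ℝ) (R : Fin N → ℕ) (i : ∀ k, Fin (I k)) :
    (S i - truncate S R i) ^ 2 ≤ ∑ n, if R n ≤ (i n : ℕ) then S i ^ 2 else 0 := by
  have hterm_nonneg (n : Fin N) : 0 ≤ if R n ≤ (i n : ℕ) then S i ^ 2 else 0 := by
    split_ifs <;> positivity
  by_cases hbox : ∀ n, (i n : ℕ) < R n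
  · simpa [truncate, hbox] using sum_nonneg fun n _ => hterm_nonneg n
  · obtain ⟨n, hn⟩ := not_forall.mp hbox
    simpa [truncate, hbox, not_lt.mp hn] using
      single_le_sum (fun n _ => hterm_nonneg n) (mem_univ n)

lemma frobSq_sub_truncate_le (S : (∀ k, Fin (I k)) → ℝ) (R : Fin N → ℕ) :
    frobSq (S - truncate S R) ≤
      ∑ n, ∑ α ∈ univ.filter (fun α : Fin (I n) => R n ≤ (α : ℕ)), ∑ j, modeUnfold S n α j ^ 2 :=
  calc frobSq (S - truncate S R)
      ≤ ∑ i, ∑ n, if R n ≤ (i n : ℕ) then S i ^ 2 else 0 :=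
        sum_le_sum fun i _ => sq_sub_truncate_le S R i
    _ = ∑ n, ∑ i, if R n ≤ (i n : ℕ) then S i ^ 2 else 0 := sum_comm
    _ = _ := sum_congr rfl fun n _ => by
        rw [sum_eq_sum_fullIdx n]
        simp only [sum_filter, modeUnfold, fullIdx_self, ite_sum_zero]

end Hosvd

theorem hosvd_reconstruction_upper_bound_general {N : ℕ} {I : Fin N → ℕ}
    (X S : (∀ k, Fin (I k)) → ℝ) (U : ∀ n, Matrix (Fin (I n)) (Fin (I n)) ℝ)
    (hU : ∀ n, (U n)ᵀ * U n = 1)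
    (hX : X = tucker S U)
    (horth : ∀ (n : Fin N) (α β : Fin (I n)), α ≠ β →
      ∑ j, modeUnfold S n α j * modeUnfold S n β j = 0)
    (hord : ∀ (n : Fin N) (α β : Fin (I n)), α ≤ β →
      Real.sqrt (∑ j, modeUnfold S n β j ^ 2) ≤
        Real.sqrt (∑ j, modeUnfold S n α j ^ 2))
    (σ : ∀ n, Fin (I n) → ℝ) (hσ : ∀ n, IsSingularValues (modeUnfold X n) (σ n))
    (R : Fin N → ℕ) (hR : ∀ n, 1 ≤ R n ∧ R n ≤ I n)
    (Xhat : (∀ k, Fin (I k)) → ℝ) (hXhat : Xhat = tucker (truncate S R) U) :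
    tuckerLoss I X R ≤ frobSq (fun i => X i - Xhat i) ∧
      frobSq (fun i => X i - Xhat i) ≤ surrLoss σ R := by
  subst hX hXhat
  have hslice_norms (n : Fin N) : (σ n · ^ 2) = fun α => ∑ j, modeUnfold S n α j ^ 2 :=
    sq_singularValues_modeUnfold_tucker hU (horth n) (fun α β hαβ =>
      (Real.sqrt_le_sqrt_iff (sum_nonneg fun _ _ => sq_nonneg _)).mp (hord n α β hαβ)) (hσ n)
  refine ⟨?_, ?_⟩
  · rw [tucker_truncate fun n => (hR n).2]
    exact tuckerLoss_le _ _ _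
  · calc frobSq (tucker S U - tucker (truncate S R) U)
        = frobSq (S - truncate S R) := by rw [tucker_sub, frobSq_tucker_of_orthogonal _ hU]
      _ ≤ _ := frobSq_sub_truncate_le S R
      _ = surrLoss σ R := by simp only [surrLoss, ← hslice_norms]

/-- **Upper bound for the reconstruction error of the truncated HOSVD**:
`L(X, R) ≤ ‖X − X̂‖_F² ≤ Σ_n Σ_{i > R_n} (σ_i⁽ⁿ⁾)²`. -/
theorem hosvd_reconstruction_upper_bound {N : ℕ} {I : Fin N → ℕ} (hI : ∀ n, 1 ≤ I n)
    (X S : (∀ k, Fin (I k)) → ℝ) (U : ∀ n, Matrix (Fin (I n)) (Fin (I n)) ℝ)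
    (hU : ∀ n, (U n)ᵀ * U n = 1)
    (hX : X = tucker S U)
    (horth : ∀ (n : Fin N) (α β : Fin (I n)), α ≠ β →
      ∑ j, modeUnfold S n α j * modeUnfold S n β j = 0)
    (hord : ∀ (n : Fin N) (α β : Fin (I n)), α ≤ β →
      Real.sqrt (∑ j, modeUnfold S n β j ^ 2) ≤
        Real.sqrt (∑ j, modeUnfold S n α j ^ 2))
    (σ : ∀ n, Fin (I n) → ℝ) (hσ : ∀ n, IsSingularValues (modeUnfold X n) (σ n))
    (R : Fin N → ℕ) (hR : ∀ n, 1 ≤ R n ∧ R n ≤ I n)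
    (Xhat : (∀ k, Fin (I k)) → ℝ) (hXhat : Xhat = tucker (truncate S R) U) :
    tuckerLoss I X R ≤ frobSq (fun i => X i - Xhat i) ∧
      frobSq (fun i => X i - Xhat i) ≤ surrLoss σ R :=
  hosvd_reconstruction_upper_bound_general X S U hU hX horth hord σ hσ R hR Xhat hXhat
end

section
/- Consider a Tucker packing instance with shape (I_1,…,I_N) ∈ ℤ_{≥1}^N, nonincreasing sequences a^(n) ∈ ℝ_{≥0}^{I_n}, and budget c ≥ 1, and let 0 < ε < 1/3. Suppose r* = (R*_1,…,R*_N) ∈ [I_1]×⋯×[I_N] is feasible (∏_{n=1}^N R*_n + Σ_{n=1}^N I_n R*_n ≤ c) and there is an index m ∈ [N] with R*_m ≥ ⌈1/ε⌉. Let k* be the largest nonnegative integer with (1+ε)^{k*} ≤ ∏_{n=1}^N R*_n, and define r̂ by R̂_n = R*_n for n ≠ m and R̂_m = ⌊R*_m/(1+ε)⌋. Then r̂ ∈ [I_1]×⋯×[I_N], ∏_{n=1}^N R̂_n ≤ (1+ε)^{k*}, Σ_{n=1}^N I_n R̂_n ≤ c − (1+ε)^{k*}, and f(r̂) ≥ (1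 − 2ε) · f(r*), where f(r) = Σ_{n=1}^N Σ_{i=1}^{R_n} a_i^(n). -/
open scoped BigOperators

/-- Tucker packing objective `f(R) = Σ_{n=1}^N Σ_{i=1}^{R_n} a_i⁽ⁿ⁾`
(sequences are indexed starting at `1`). -/
noncomputable def fObj {N : ℕ} (a : Fin N → ℕ → ℝ) (R : Fin N → ℕ) : ℝ :=
  ∑ n, ∑ i ∈ Finset.Icc 1 (R n), a n i

/-!
Shrinking the large mode `m` by the factor `1 + ε` divides the core size `∏ R*_n` by at least
`1 + ε`, which pushes it below `(1+ε)^{k*}` because `∏ R*_n < (1+ε)^{k*+1}` by maximality of `k*`;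
the linear part of the budget only decreases, and the core part of the old budget was at least
`(1+ε)^{k*}`. Since `R*_m ≥ 1/ε`, the floor loses at most one unit, so `R̂_m ≥ (1 - 2ε) R*_m`.
For a nonincreasing sequence the average of a prefix is at least the average of the whole, hence
the kept part of mode `m` retains a `(1 - 2ε)` fraction of its contribution, and the other modes
are untouched.
-/

open Finset Function

lemma one_sub_two_mul_mul_le_floor_div_one_add {ε x : ℝ} (hε : 0 < ε) (hx : 1 ≤ ε * x) :
    (1 - 2 * ε) * x ≤ ⌊x / (1 + ε)⌋₊ := by
  have hfloor : x / (1 + ε) - 1 < ⌊x / (1 + ε)⌋₊ := Nat.sub_one_lt_floor _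
  have hdiv : (1 - 2 * ε) * x ≤ x / (1 + ε) - 1 := by
    rw [le_sub_iff_add_le, le_div_iff₀ (by linarith)]
    nlinarith [mul_le_mul_of_nonneg_left hx (by linarith : (0 : ℝ) ≤ 1 + 2 * ε)]
  linarith

lemma mul_sum_Icc_le_mul_sum_Icc_of_antitoneOn {a : ℕ → ℝ} {h R : ℕ}
    (ha : AntitoneOn a (Set.Icc 1 R)) (hhR : h ≤ R) :
    (h : ℝ) * ∑ i ∈ Icc 1 R, a i ≤ R * ∑ i ∈ Icc 1 h, a i := by
  rcases hhR.eq_or_lt with rfl | hlt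
  · exact le_rfl
  set b := a (h + 1)
  have hsplit : ∑ i ∈ Icc 1 R, a i = ∑ i ∈ Icc 1 h, a i + ∑ i ∈ Icc (h + 1) R, a i := by
    rw [show Icc 1 R = Ioc 0 R from Icc_add_one_left_eq_Ioc 0 R,
      show Icc 1 h = Ioc 0 h from Icc_add_one_left_eq_Ioc 0 h, Icc_add_one_left_eq_Ioc]
    exact (sum_Ioc_consecutive a h.zero_le hhR).symm
  have hhead : (h : ℝ) * b ≤ ∑ i ∈ Icc 1 h, a i := by
    have := card_nsmul_le_sum (Icc 1 h) a b fun i hi => by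
      rw [mem_Icc] at hi
      exact ha ⟨hi.1, by omega⟩ ⟨by omega, hlt⟩ (by omega)
    simpa using this
  have htail : ∑ i ∈ Icc (h + 1) R, a i ≤ ((R : ℝ) - h) * b := by
    have := sum_le_card_nsmul (Icc (h + 1) R) a b fun i hi => by
      rw [mem_Icc] at hi
      exact ha ⟨by omega, hlt⟩ ⟨by omega, hi.2⟩ hi.1
    simpa [Nat.cast_sub hhR] using this
  have hh0 : (0 : ℝ) ≤ h := h.cast_nonneg
  have hRh : (0 : ℝ) ≤ R - h := by simpa using (Nat.cast_le (α := ℝ)).2 hhR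
  rw [hsplit]
  nlinarith [mul_le_mul_of_nonneg_left htail hh0, mul_le_mul_of_nonneg_left hhead hRh]

lemma mul_prod_update_le_prod {ι : Type*} [Fintype ι] [DecidableEq ι] (f : ι → ℕ) (i : ι)
    (b : ℕ) {t : ℝ} (hb : t * b ≤ f i) :
    t * ((∏ j, update f i b j : ℕ) : ℝ) ≤ ((∏ j, f j : ℕ) : ℝ) := by
  rw [prod_update_of_mem (mem_univ i), prod_eq_mul_prod_sdiff_singleton_of_mem (mem_univ i)]
  push_cast
  rw [← mul_assoc]
  exact mul_le_mul_of_nonneg_right hb (prod_nonneg fun _ _ => Nat.cast_nonneg _)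

lemma fObj_update {N : ℕ} (a : Fin N → ℕ → ℝ) (R : Fin N → ℕ) (m : Fin N) (b : ℕ) :
    fObj a (update R m b) = fObj a R - ∑ i ∈ Icc 1 (R m), a m i + ∑ i ∈ Icc 1 b, a m i := by
  have hupd := apply_update (fun n r => ∑ i ∈ Icc 1 r, a n i) R m b
  simp only [fObj, hupd, sum_update_of_mem (mem_univ m)]
  rw [sum_eq_add_sum_sdiff_singleton_of_mem (mem_univ m)]
  ring

lemma sum_Icc_le_fObj {N : ℕ} {a : Fin N → ℕ → ℝ} {R : Fin N → ℕ}
    (ha : ∀ n, ∀ i ∈ Icc 1 (R n), 0 ≤ a n i) (m : Fin N) :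
    ∑ i ∈ Icc 1 (R m), a m i ≤ fObj a R :=
  single_le_sum (f := fun n => ∑ i ∈ Icc 1 (R n), a n i)
    (fun n _ => sum_nonneg (ha n)) (mem_univ m)

lemma mul_fObj_le_fObj_update {N : ℕ} {a : Fin N → ℕ → ℝ} {R : Fin N → ℕ} {m : Fin N} {b : ℕ}
    {t : ℝ} (ha : ∀ n, ∀ i ∈ Icc 1 (R n), 0 ≤ a n i) (hanti : AntitoneOn (a m) (Set.Icc 1 (R m)))
    (hR : 0 < R m) (hbR : b ≤ R m) (htb : t * R m ≤ b) (ht : t ≤ 1) :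
    t * fObj a R ≤ fObj a (update R m b) := by
  have hprefix := mul_sum_Icc_le_mul_sum_Icc_of_antitoneOn hanti hbR
  have hS0 : 0 ≤ ∑ i ∈ Icc 1 (R m), a m i := sum_nonneg (ha m)
  have hSf := sum_Icc_le_fObj ha m
  have hkept : t * ∑ i ∈ Icc 1 (R m), a m i ≤ ∑ i ∈ Icc 1 b, a m i := by
    refine le_of_mul_le_mul_left ?_ (Nat.cast_pos.2 hR)
    nlinarith [mul_le_mul_of_nonneg_right htb hS0]
  rw [fObj_update]
  nlinarith

theorem large_shape_rounding_general {N : ℕ} (I : Fin N → ℕ)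
    (a : Fin N → ℕ → ℝ)
    (ha0 : ∀ n i, 1 ≤ i → i ≤ I n → 0 ≤ a n i)
    (hamono : ∀ n i j, 1 ≤ i → i ≤ j → j ≤ I n → a n j ≤ a n i)
    (c : ℝ)
    (ε : ℝ) (hε0 : 0 < ε) (hε3 : ε < 1 / 3)
    (Rstar : Fin N → ℕ) (hshape : ∀ n, 1 ≤ Rstar n ∧ Rstar n ≤ I n)
    (hfeas : ((∏ n, Rstar n : ℕ) : ℝ) + ((∑ n, I n * Rstar n : ℕ) : ℝ) ≤ c)
    (m : Fin N) (hm : ⌈1 / ε⌉₊ ≤ Rstar m)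
    (kstar : ℕ) (hk1 : (1 + ε) ^ kstar ≤ ((∏ n, Rstar n : ℕ) : ℝ))
    (hk2 : ∀ k : ℕ, (1 + ε) ^ k ≤ ((∏ n, Rstar n : ℕ) : ℝ) → k ≤ kstar)
    (Rhat : Fin N → ℕ)
    (hRhat : Rhat = Function.update Rstar m ⌊((Rstar m : ℝ)) / (1 + ε)⌋₊) :
    (∀ n, 1 ≤ Rhat n ∧ Rhat n ≤ I n) ∧
      ((∏ n, Rhat n : ℕ) : ℝ) ≤ (1 + ε) ^ kstar ∧
      ((∑ n, I n * Rhat n : ℕ) : ℝ) ≤ c - (1 + ε) ^ kstar ∧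
      (1 - 2 * ε) * fObj a Rstar ≤ fObj a Rhat := by
  subst hRhat
  set h := ⌊(Rstar m : ℝ) / (1 + ε)⌋₊
  have hεR : 1 ≤ ε * Rstar m := by
    have := (div_le_iff₀ hε0).1 (Nat.ceil_le.1 hm)
    linarith
  have hkeep : (1 - 2 * ε) * Rstar m ≤ h := one_sub_two_mul_mul_le_floor_div_one_add hε0 hεR
  have hshrink : (1 + ε) * h ≤ Rstar m := by
    rw [← le_div_iff₀' (by linarith)]
    exact Nat.floor_le (by positivity)
  have hh1 : 1 ≤ h := by
    have : (0 : ℝ) < h := lt_of_lt_of_le (by nlinarith) hkeep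
    exact_mod_cast this
  have hhR : h ≤ Rstar m := by
    exact_mod_cast (le_mul_of_one_le_left h.cast_nonneg (by linarith)).trans hshrink
  refine ⟨fun n => ?_, ?_, ?_, ?_⟩
  · rcases eq_or_ne n m with rfl | hne
    · simpa using ⟨hh1, hhR.trans (hshape n).2⟩
    · simpa [hne] using hshape n
  · have hmax : ((∏ n, Rstar n : ℕ) : ℝ) < (1 + ε) ^ kstar * (1 + ε) :=
      pow_succ (1 + ε) kstar ▸ lt_of_not_ge fun hle => by simpa using hk2 _ hle
    nlinarith [mul_prod_update_le_prod Rstar m h hshrink]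
  · have : ((∑ n, I n * update Rstar m h n : ℕ) : ℝ) ≤ ((∑ n, I n * Rstar n : ℕ) : ℝ) := by
      exact_mod_cast sum_le_sum fun n _ => Nat.mul_le_mul_left _ (update_le_self_iff.2 hhR n)
    linarith
  · exact mul_fObj_le_fObj_update
      (fun n i hi => ha0 n i (mem_Icc.1 hi).1 ((mem_Icc.1 hi).2.trans (hshape n).2))
      (fun i hi j hj hij => hamono m i j hi.1 hij (hj.2.trans (hshape m).2))
      (by omega) hhR hkeep (by linarith)

/-- **Rounding a large feasible shape**: if a feasible shape `R*` has a large mode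
`m` (with `R*_m ≥ ⌈1/ε⌉`) and `k*` is the largest exponent with
`(1+ε)^{k*} ≤ ∏_n R*_n`, then shrinking mode `m` to `⌊R*_m/(1+ε)⌋` yields a core
shape `R̂` that fits the budget split `((1+ε)^{k*}, c − (1+ε)^{k*})` and loses at
most a factor `(1 − 2ε)` in the objective. -/
theorem large_shape_rounding {N : ℕ} (I : Fin N → ℕ) (hI : ∀ n, 1 ≤ I n)
    (a : Fin N → ℕ → ℝ)
    (ha0 : ∀ n i, 1 ≤ i → i ≤ I n → 0 ≤ a n i)
    (hamono : ∀ n i j, 1 ≤ i → i ≤ j → j ≤ I n → a n j ≤ a n i)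
    (c : ℝ) (hc : 1 ≤ c)
    (ε : ℝ) (hε0 : 0 < ε) (hε3 : ε < 1 / 3)
    (Rstar : Fin N → ℕ) (hshape : ∀ n, 1 ≤ Rstar n ∧ Rstar n ≤ I n)
    (hfeas : ((∏ n, Rstar n : ℕ) : ℝ) + ((∑ n, I n * Rstar n : ℕ) : ℝ) ≤ c)
    (m : Fin N) (hm : ⌈1 / ε⌉₊ ≤ Rstar m)
    (kstar : ℕ) (hk1 : (1 + ε) ^ kstar ≤ ((∏ n, Rstar n : ℕ) : ℝ))
    (hk2 : ∀ k : ℕ, (1 + ε) ^ k ≤ ((∏ n, Rstar n : ℕ) : ℝ) → k ≤ kstar)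
    (Rhat : Fin N → ℕ)
    (hRhat : Rhat = Function.update Rstar m ⌊((Rstar m : ℝ)) / (1 + ε)⌋₊) :
    (∀ n, 1 ≤ Rhat n ∧ Rhat n ≤ I n) ∧
      ((∏ n, Rhat n : ℕ) : ℝ) ≤ (1 + ε) ^ kstar ∧
      ((∑ n, I n * Rhat n : ℕ) : ℝ) ≤ c - (1 + ε) ^ kstar ∧
      (1 - 2 * ε) * fObj a Rstar ≤ fObj a Rhat :=
  large_shape_rounding_general I a ha0 hamono c ε hε0 hε3 Rstar hshape hfeas m hm kstar hk1 hk2 Rhat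
    hRhat
end
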